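/- Let (f, W, P) and (f̃, W̃, P̃) be two models satisfying all the assumptions of the identifiability theorem: for all e ∈ {0, ..., M}, f(Z + W a_e) is equal in distribution to f̃(Z̃ + W̃ a_e) with Z ~ P, Z̃ ~ P̃ independent; f and f̃ are C²-diffeomorphisms onto their images; P = N(−W a_0, I) and P̃ = N(−W̃ a_0, I); and rank(W̃ A) = d_Z or rank(W A) = d_Z. Let a_test ∈ ℝ^K be any vector such that a_test − a_0 lies in the linear span of {a_e − a_0 : e ∈ {1, ..., M}}. Then f(Z + W a_test) is equal in distribution to f̃(Z̃ + W̃ a_test). -/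

import Mathlib

/-!
`N(v, I)` has density `exp (⟪z, v⟫ - ‖v‖² / 2)` with respect to `N(0, I)`. Pushing forward
along the injective `f` with a measurable left inverse `G`, the law of `f (Z + W a)` is the law `ν`
of `f (N(0, I))` tilted by that density at `v = W (a - a₀)`, evaluated at `G y`. The case `e = 0`
shows that both models have the same `ν`. For `e ≥ 1`, equality of the laws gives `ν`-a.e.
equality of the log-densities, which are affine in `v`; so the same linear combination gives the
log-densities at `a_test`, up to an additive constant. That constant is `0` because both tilted
measures are probability measures.
-/

open MeasureTheory ProbabilityTheory

/-- The multivariate Gaussian distribution `N(m, I)` on `ℝ^d` with mean `m` and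
identity covariance, realized as the shift by `m` of a product of standard Gaussians. -/
noncomputable def gaussianId (d : ℕ) (m : Fin d → ℝ) :
    MeasureTheory.Measure (Fin d → ℝ) :=
  (MeasureTheory.Measure.pi fun _ : Fin d => ProbabilityTheory.gaussianReal 0 1).map
    (fun z => m + z)

/-- `f : ℝ^n → ℝ^D` is a `C²`-diffeomorphism onto its image: it is `C²`, injective,
and has a `C²` inverse on its range. -/
def IsC2DiffeoOntoImage {n m : ℕ} (f : (Fin n → ℝ) → (Fin m → ℝ)) : Prop :=
  ContDiff ℝ 2 f ∧ Function.Injective f ∧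
    ∃ g : (Fin m → ℝ) → (Fin n → ℝ), (∀ z, g (f z) = z) ∧
      ContDiffOn ℝ 2 g (Set.range f)

open Real Matrix
open scoped ENNReal

lemma lintegral_pi_prod {ι : Type*} [Fintype ι] {Ω : ι → Type*} [∀ i, MeasurableSpace (Ω i)]
    (μ : (i : ι) → Measure (Ω i)) [∀ i, IsProbabilityMeasure (μ i)]
    {g : (i : ι) → Ω i → ℝ≥0∞} (hg : ∀ i, Measurable (g i)) :
    ∫⁻ x, ∏ i, g i (x i) ∂Measure.pi μ = ∏ i, ∫⁻ x, g i x ∂μ i := by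
  rw [lintegral_prod_eq_prod_lintegral_of_indepFun _ _
    (iIndepFun_pi fun i => (hg i).aemeasurable) fun i => (hg i).comp (measurable_pi_apply i)]
  exact Finset.prod_congr rfl fun i _ => (measurePreserving_eval μ i).lintegral_comp (hg i)

lemma pi_eq_withDensity_prod {ι : Type*} [Fintype ι] {Ω : ι → Type*}
    [∀ i, MeasurableSpace (Ω i)] (μ : (i : ι) → Measure (Ω i)) [∀ i, IsProbabilityMeasure (μ i)]
    (ν : (i : ι) → Measure (Ω i)) [∀ i, SigmaFinite (ν i)] {g : (i : ι) → Ω i → ℝ≥0∞}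
    (hg : ∀ i, Measurable (g i)) (hν : ∀ i, ν i = (μ i).withDensity (g i)) :
    Measure.pi ν = (Measure.pi μ).withDensity fun x => ∏ i, g i (x i) := by
  refine Measure.pi_eq fun s hs => ?_
  have hbox : (Set.univ.pi s).indicator (fun x => ∏ i, g i (x i))
      = fun x => ∏ i, (s i).indicator (g i) (x i) := by
    ext x
    by_cases hx : x ∈ Set.univ.pi s
    · simp_all [Set.indicator_of_mem]
    · obtain ⟨i, hi⟩ : ∃ i, x i ∉ s i := by simpa [Set.mem_univ_pi] using hx
      rw [Set.indicator_of_notMem hx]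
      exact (Finset.prod_eq_zero (Finset.mem_univ i) (Set.indicator_of_notMem hi _)).symm
  rw [withDensity_apply _ (.univ_pi hs), ← lintegral_indicator (.univ_pi hs), hbox,
    lintegral_pi_prod μ fun i => (hg i).indicator (hs i)]
  exact Finset.prod_congr rfl fun i _ => by
    rw [lintegral_indicator (hs i), hν, withDensity_apply _ (hs i)]

lemma gaussianReal_eq_withDensity (m : ℝ) :
    gaussianReal m 1 =
      (gaussianReal 0 1).withDensity fun x => ENNReal.ofReal (exp (x * m - m ^ 2 / 2)) := by
  rw [gaussianReal_of_var_ne_zero m one_ne_zero, gaussianReal_of_var_ne_zero 0 one_ne_zero,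
    ← withDensity_mul _ (measurable_gaussianPDF 0 1) (by fun_prop)]
  congr 1
  ext x
  simp only [Pi.mul_apply, gaussianPDF, ← ENNReal.ofReal_mul (gaussianPDFReal_nonneg 0 1 x)]
  congr 1
  simp only [gaussianPDFReal, NNReal.coe_one, mul_one, sub_zero, mul_assoc, ← exp_add]
  congr 2
  ring

lemma gaussianId_eq_pi (d : ℕ) (m : Fin d → ℝ) :
    gaussianId d m = Measure.pi fun i => gaussianReal (m i) 1 :=
  (measurePreserving_pi _ _ fun i => ⟨measurable_const_add (m i),
    by simpa using gaussianReal_map_const_add (μ := 0) (v := 1) (m i)⟩).map_eq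

instance isProbabilityMeasure_gaussianId (d : ℕ) (m : Fin d → ℝ) :
    IsProbabilityMeasure (gaussianId d m) := by
  rw [gaussianId_eq_pi]
  infer_instance

noncomputable def gaussianShiftDensity {ι : Type*} [Fintype ι] (v z : ι → ℝ) : ℝ≥0∞ :=
  ENNReal.ofReal (exp (z ⬝ᵥ v - v ⬝ᵥ v / 2))

@[fun_prop]
lemma measurable_gaussianShiftDensity {ι : Type*} [Fintype ι] (v : ι → ℝ) :
    Measurable (gaussianShiftDensity v) := by
  unfold gaussianShiftDensity dotProduct
  fun_prop

@[simp]
lemma gaussianShiftDensity_zero {ι : Type*} [Fintype ι] :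
    gaussianShiftDensity (0 : ι → ℝ) = 1 := by
  ext z
  simp [gaussianShiftDensity]

lemma gaussianId_eq_withDensity (d : ℕ) (v : Fin d → ℝ) :
    gaussianId d v = (gaussianId d 0).withDensity (gaussianShiftDensity v) := by
  rw [gaussianId_eq_pi, pi_eq_withDensity_prod _ _ (fun i => by fun_prop)
    fun i => gaussianReal_eq_withDensity (v i), gaussianId_eq_pi]
  simp only [Pi.zero_apply]
  congr 1
  ext z
  rw [← ENNReal.ofReal_prod_of_nonneg fun i _ => (exp_nonneg _), ← exp_sum,
    Finset.sum_sub_distrib, ← Finset.sum_div]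
  simp only [gaussianShiftDensity, dotProduct, sq]

lemma gaussianId_map_add_const (d : ℕ) (m c : Fin d → ℝ) :
    (gaussianId d m).map (· + c) = gaussianId d (m + c) := by
  rw [gaussianId, gaussianId, Measure.map_map (measurable_add_const c) (measurable_const_add m)]
  congr 1
  ext z : 1
  exact add_right_comm m z c

lemma map_withDensity_comp {α β : Type*} [MeasurableSpace α] [MeasurableSpace β]
    (μ : Measure α) {f : α → β} (hf : Measurable f) {σ : β → ℝ≥0∞} (hσ : Measurable σ) :
    (μ.withDensity (σ ∘ f)).map f = (μ.map f).withDensity σ := by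
  ext s hs
  rw [Measure.map_apply hf hs, withDensity_apply _ (hf hs), withDensity_apply _ hs,
    setLIntegral_map hs hσ hf, Function.comp_def]

lemma gaussianId_map_comp_add {Y : Type*} [MeasurableSpace Y] {d : ℕ}
    {h : (Fin d → ℝ) → Y} {G : Y → (Fin d → ℝ)} (hh : Measurable h) (hG : Measurable G)
    (hGh : Function.LeftInverse G h) (m c : Fin d → ℝ) :
    (gaussianId d m).map (fun z => h (z + c)) =
      ((gaussianId d 0).map h).withDensity (gaussianShiftDensity (m + c) ∘ G) := by
  rw [← map_withDensity_comp _ hh (by fun_prop), Function.comp_assoc, hGh.id, Function.comp_id,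
    ← gaussianId_eq_withDensity, ← gaussianId_map_add_const,
    Measure.map_map hh (measurable_add_const c)]
  rfl

lemma exists_gaussianShiftDensity_sum_eq_mul {ι κ : Type*} [Fintype ι] [Fintype κ]
    (v w : ι → κ → ℝ) (c : ι → ℝ) :
    ∃ k : ℝ≥0∞, ∀ x y : κ → ℝ,
      (∀ i, gaussianShiftDensity (v i) x = gaussianShiftDensity (w i) y) →
      gaussianShiftDensity (∑ i, c i • v i) x = k * gaussianShiftDensity (∑ i, c i • w i) y := by
  set V := ∑ i, c i • v i
  set W := ∑ i, c i • w i
  refine ⟨ENNReal.ofReal (exp (∑ i, c i * (v i ⬝ᵥ v i / 2 - w i ⬝ᵥ w i / 2) - V ⬝ᵥ V / 2 +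
    W ⬝ᵥ W / 2)), fun x y hxy => ?_⟩
  have hexp : ∀ i, x ⬝ᵥ v i = y ⬝ᵥ w i + (v i ⬝ᵥ v i / 2 - w i ⬝ᵥ w i / 2) := fun i => by
    have := hxy i
    rw [gaussianShiftDensity, gaussianShiftDensity,
      ENNReal.ofReal_eq_ofReal_iff (exp_nonneg _) (exp_nonneg _), exp_eq_exp] at this
    linarith
  have hV : x ⬝ᵥ V = y ⬝ᵥ W + ∑ i, c i * (v i ⬝ᵥ v i / 2 - w i ⬝ᵥ w i / 2) := by
    simp only [V, W, dotProduct_sum, dotProduct_smul, smul_eq_mul, hexp, mul_add,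
      Finset.sum_add_distrib]
  rw [gaussianShiftDensity, gaussianShiftDensity, ← ENNReal.ofReal_mul (exp_nonneg _), ← exp_add,
    hV]
  congr 2
  ring

lemma withDensity_eq_of_ae_eq_const_mul {α : Type*} [MeasurableSpace α] {ν : Measure α}
    {f g : α → ℝ≥0∞} (hg : Measurable g) {k : ℝ≥0∞} (hfg : f =ᵐ[ν] fun x => k * g x)
    [IsProbabilityMeasure (ν.withDensity f)] [IsProbabilityMeasure (ν.withDensity g)] :
    ν.withDensity f = ν.withDensity g := by
  have hfg' : ν.withDensity f = k • ν.withDensity g := by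
    rw [withDensity_congr_ae hfg, ← withDensity_smul k hg]
    rfl
  have hk : k = 1 := by simpa using (congrArg (· Set.univ) hfg').symm
  rw [hfg', hk, one_smul]

lemma withDensity_gaussianShiftDensity_sum_eq {Y : Type*} [MeasurableSpace Y] {ν : Measure Y}
    [SigmaFinite ν] {ι κ : Type*} [Fintype ι] [Fintype κ] {T U : Y → κ → ℝ}
    (hT : Measurable T) (hU : Measurable U) {v w : ι → κ → ℝ}
    (h : ∀ i, ν.withDensity (gaussianShiftDensity (v i) ∘ T) =
      ν.withDensity (gaussianShiftDensity (w i) ∘ U)) (c : ι → ℝ)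
    [IsProbabilityMeasure (ν.withDensity (gaussianShiftDensity (∑ i, c i • v i) ∘ T))]
    [IsProbabilityMeasure (ν.withDensity (gaussianShiftDensity (∑ i, c i • w i) ∘ U))] :
    ν.withDensity (gaussianShiftDensity (∑ i, c i • v i) ∘ T) =
      ν.withDensity (gaussianShiftDensity (∑ i, c i • w i) ∘ U) := by
  have hae : ∀ᵐ y ∂ν, ∀ i, gaussianShiftDensity (v i) (T y) = gaussianShiftDensity (w i) (U y) :=
    ae_all_iff.2 fun i => (withDensity_eq_iff_of_sigmaFinite (by fun_prop) (by fun_prop)).1 (h i)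
  obtain ⟨k, hk⟩ := exists_gaussianShiftDensity_sum_eq_mul v w c
  exact withDensity_eq_of_ae_eq_const_mul (by fun_prop) (hae.mono fun y hy => hk _ _ hy)

lemma IsC2DiffeoOntoImage.exists_measurable_leftInverse {n m : ℕ}
    {f : (Fin n → ℝ) → (Fin m → ℝ)} (hf : IsC2DiffeoOntoImage f) :
    Measurable f ∧ ∃ G : (Fin m → ℝ) → (Fin n → ℝ), Measurable G ∧ Function.LeftInverse G f := by
  have hfm : Measurable f := hf.1.continuous.measurable
  obtain ⟨G, hGm, hGf⟩ := (hfm.measurableEmbedding hf.2.1).exists_measurable_extend measurable_id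
    fun _ => ⟨0⟩
  exact ⟨hfm, G, hGm, congrFun hGf⟩

theorem extrapolation_to_span_general
    (dZ D K M : ℕ)
    (a : Fin (M + 1) → (Fin K → ℝ))
    (f ftilde : (Fin dZ → ℝ) → (Fin D → ℝ))
    (W Wt : Matrix (Fin dZ) (Fin K) ℝ)
    (hf : IsC2DiffeoOntoImage f) (hft : IsC2DiffeoOntoImage ftilde)
    (heq : ∀ e : Fin (M + 1),
      (gaussianId dZ (-(W.mulVec (a 0)))).map (fun z => f (z + W.mulVec (a e))) =
        (gaussianId dZ (-(Wt.mulVec (a 0)))).map (fun z => ftilde (z + Wt.mulVec (a e))))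
    (atest : Fin K → ℝ)
    (hspan : atest - a 0 ∈
      Submodule.span ℝ (Set.range fun e : Fin M => a e.succ - a 0)) :
    (gaussianId dZ (-(W.mulVec (a 0)))).map (fun z => f (z + W.mulVec atest)) =
      (gaussianId dZ (-(Wt.mulVec (a 0)))).map (fun z => ftilde (z + Wt.mulVec atest)) := by
  obtain ⟨hfm, G, hGm, hGf⟩ := hf.exists_measurable_leftInverse
  obtain ⟨hftm, Gt, hGtm, hGtf⟩ := hft.exists_measurable_leftInverse
  have law (V : Matrix (Fin dZ) (Fin K) ℝ) {h : (Fin dZ → ℝ) → (Fin D → ℝ)} {H}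
      (hh : Measurable h) (hH : Measurable H) (hHh : Function.LeftInverse H h) (x : Fin K → ℝ) :
      (gaussianId dZ (-(V *ᵥ a 0))).map (fun z => h (z + V *ᵥ x)) =
        ((gaussianId dZ 0).map h).withDensity (gaussianShiftDensity (V *ᵥ (x - a 0)) ∘ H) := by
    rw [gaussianId_map_comp_add hh hH hHh, neg_add_eq_sub, mulVec_sub]
  have hν : (gaussianId dZ 0).map f = (gaussianId dZ 0).map ftilde := by
    simpa [law W hfm hGm hGf, law Wt hftm hGtm hGtf] using heq 0
  have : IsProbabilityMeasure ((gaussianId dZ 0).map f) :=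
    Measure.isProbabilityMeasure_map hfm.aemeasurable
  obtain ⟨c, hc⟩ := (Submodule.mem_span_range_iff_exists_fun ℝ).1 hspan
  have hcomb (V : Matrix (Fin dZ) (Fin K) ℝ) :
      V *ᵥ (atest - a 0) = ∑ e, c e • V *ᵥ (a e.succ - a 0) := by
    simp only [← hc, mulVec_sum, mulVec_smul]
  have hprob : IsProbabilityMeasure
      ((gaussianId dZ (-(W *ᵥ a 0))).map (fun z => f (z + W *ᵥ atest))) :=
    Measure.isProbabilityMeasure_map (hfm.comp (measurable_add_const _)).aemeasurable
  have hprobt : IsProbabilityMeasure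
      ((gaussianId dZ (-(Wt *ᵥ a 0))).map (fun z => ftilde (z + Wt *ᵥ atest))) :=
    Measure.isProbabilityMeasure_map (hftm.comp (measurable_add_const _)).aemeasurable
  rw [law W hfm hGm hGf, hcomb] at hprob ⊢
  rw [law Wt hftm hGtm hGtf, hcomb, ← hν] at hprobt ⊢
  refine withDensity_gaussianShiftDensity_sum_eq hGm hGtm (fun e => ?_) c
  rw [← law W hfm hGm hGf, hν, ← law Wt hftm hGtm hGtf]
  exact heq e.succ

/-- **Extrapolation to the span of the relative perturbations.**
Under the assumptions of the identifiability theorem, for any unseen perturbation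
label `a_test` with `a_test - a₀ ∈ span{a_e - a₀ : e ∈ [M]}`, the effect of `a_test`
is uniquely identified: `f(Z + W a_test)` and `f̃(Z̃ + W̃ a_test)` are equal in
distribution. -/
theorem extrapolation_to_span
    (dZ D K M : ℕ) (hdZ : 1 ≤ dZ) (hD : 1 ≤ D) (hK : 1 ≤ K)
    (a : Fin (M + 1) → (Fin K → ℝ))
    (A : Matrix (Fin K) (Fin M) ℝ)
    (hA : A = Matrix.of fun k (e : Fin M) => a e.succ k - a 0 k)
    (f ftilde : (Fin dZ → ℝ) → (Fin D → ℝ))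
    (W Wt : Matrix (Fin dZ) (Fin K) ℝ)
    (hf : IsC2DiffeoOntoImage f) (hft : IsC2DiffeoOntoImage ftilde)
    (heq : ∀ e : Fin (M + 1),
      (gaussianId dZ (-(W.mulVec (a 0)))).map (fun z => f (z + W.mulVec (a e))) =
        (gaussianId dZ (-(Wt.mulVec (a 0)))).map (fun z => ftilde (z + Wt.mulVec (a e))))
    (hrank : (Wt * A).rank = dZ ∨ (W * A).rank = dZ)
    (atest : Fin K → ℝ)
    (hspan : atest - a 0 ∈
      Submodule.span ℝ (Set.range fun e : Fin M => a e.succ - a 0)) :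
    (gaussianId dZ (-(W.mulVec (a 0)))).map (fun z => f (z + W.mulVec atest)) =
      (gaussianId dZ (-(Wt.mulVec (a 0)))).map (fun z => ftilde (z + Wt.mulVec atest)) :=
  extrapolation_to_span_general dZ D K M a f ftilde W Wt hf hft heq atest hspan
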